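/- arXiv:2009.06211 — 7 statements merged into one kernel-verified Lean document; each statement's English description precedes it below -/
import Mathlib

section
/- Let M be a real d×d matrix such that the spectral radius of |M| (the entrywise absolute value of M) is strictly less than 1, let φ : ℝ → ℝ be componentwise non-expansive, and let v ∈ ℝ^d. Then the equation x = φ(Mx + v), with φ applied entrywise, has exactly one solution x ∈ ℝ^d. -/
open Matrix

/-- The spectral radius of a real square matrix: the supremum of the moduli of its
complex eigenvalues (elements of the spectrum of the matrix viewed over `ℂ`). -/
noncomputable def specRad {ι : Type*} [Fintype ι] [DecidableEq ι]
    (M : Matrix ι ι ℝ) : ENNReal :=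
  spectralRadius ℂ (M.map Complex.ofReal)

attribute [local instance] Matrix.linftyOpNormedRing Matrix.linftyOpNormedAlgebra

theorem stmt_0 {d : ℕ} (M : Matrix (Fin d) (Fin d) ℝ)
    (hρ : specRad (M.map fun a => |a|) < 1)
    (φ : ℝ → ℝ) (hφ : ∀ a b : ℝ, |φ a - φ b| ≤ |a - b|)
    (v : Fin d → ℝ) :
    ∃! x : Fin d → ℝ, x = fun i => φ ((M.mulVec x + v) i) := by
  classical
  set N : Matrix (Fin d) (Fin d) ℝ := M.map fun a => |a| with hNdef
  have hN0 : ∀ i j, 0 ≤ N i j := fun i j => abs_nonneg _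
  -- Gelfand: find n ≥ 1 with ‖(N.map ofReal) ^ n‖₊ < 1
  haveI : CompleteSpace (Matrix (Fin d) (Fin d) ℂ) := FiniteDimensional.complete ℂ _
  have hGel := spectrum.pow_nnnorm_pow_one_div_tendsto_nhds_spectralRadius
    (N.map Complex.ofReal)
  have hev : ∀ᶠ n : ℕ in Filter.atTop,
      ((‖(N.map Complex.ofReal) ^ n‖₊ : ENNReal) ^ (1 / (n : ℝ)) < 1) :=
    hGel.eventually_lt_const hρ
  obtain ⟨n, hn1, hnlt⟩ := ((Filter.eventually_ge_atTop 1).and hev).exists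
  -- translate to the real matrix norm
  have hpowmap : (N.map Complex.ofReal) ^ n = (N ^ n).map Complex.ofReal := by
    have : (Complex.ofRealHom.mapMatrix (m := Fin d)) N ^ n
        = Complex.ofRealHom.mapMatrix (N ^ n) := (map_pow _ _ _).symm
    simp only [RingHom.mapMatrix_apply] at this
    rw [show ⇑Complex.ofRealHom = Complex.ofReal from rfl] at this
    exact this
  have hnorm_eq : ‖(N.map Complex.ofReal) ^ n‖₊ = ‖N ^ n‖₊ := by
    rw [hpowmap]
    simp [Matrix.linfty_opNNNorm_def, Matrix.map_apply]
  set K : NNReal := ‖N ^ n‖₊ with hKdef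
  have hK : K < 1 := by
    rw [hnorm_eq] at hnlt
    by_contra h
    push_neg at h
    have h1 : (1 : ENNReal) ≤ (K : ENNReal) := by exact_mod_cast h
    have hpos : (0 : ℝ) < 1 / (n : ℝ) := by
      have : (0 : ℝ) < (n : ℝ) := by exact_mod_cast hn1
      positivity
    have := ENNReal.one_le_rpow (x := (K : ENNReal)) h1 hpos
    exact absurd hnlt (not_lt.mpr this)
  -- the map
  set F : (Fin d → ℝ) → (Fin d → ℝ) := fun x => fun i => φ ((M.mulVec x + v) i) with hFdef
  -- one-step entrywise bound
  have hstep : ∀ (a b : Fin d → ℝ) (i : Fin d),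
      |F a i - F b i| ≤ N.mulVec (fun j => |a j - b j|) i := by
    intro a b i
    refine (hφ _ _).trans ?_
    have h1 : (M.mulVec a + v) i - (M.mulVec b + v) i
        = ∑ j, M i j * (a j - b j) := by
      simp [Matrix.mulVec, dotProduct, mul_sub, Finset.sum_sub_distrib]
    rw [h1]
    refine (Finset.abs_sum_le_sum_abs _ _).trans ?_
    rw [Matrix.mulVec, dotProduct]
    refine Finset.sum_le_sum fun j _ => ?_
    rw [abs_mul]
    exact le_of_eq rfl
  -- iterated entrywise bound
  have hiter : ∀ (k : ℕ) (a b : Fin d → ℝ) (i : Fin d),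
      |F^[k] a i - F^[k] b i| ≤ (N ^ k).mulVec (fun j => |a j - b j|) i := by
    intro k
    induction k with
    | zero => intro a b i; simp [Matrix.one_mulVec]
    | succ k ih =>
      intro a b i
      rw [Function.iterate_succ_apply', Function.iterate_succ_apply']
      refine (hstep _ _ i).trans ?_
      have : N.mulVec (fun j => |F^[k] a j - F^[k] b j|) i
          ≤ N.mulVec (fun j => ((N ^ k).mulVec (fun j' => |a j' - b j'|)) j) i := by
        simp only [Matrix.mulVec, dotProduct]
        exact Finset.sum_le_sum fun j _ =>
          mul_le_mul_of_nonneg_left (ih a b j) (hN0 i j)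
      refine this.trans (le_of_eq ?_)
      rw [Matrix.mulVec_mulVec, ← pow_succ']
  -- Lipschitz bound for F^[n]
  have hLip : LipschitzWith K (F^[n]) := by
    refine LipschitzWith.of_dist_le_mul fun x y => ?_
    have hc : (0 : ℝ) ≤ (K : ℝ) * dist x y := by positivity
    rw [dist_pi_le_iff hc]
    intro i
    set u : Fin d → ℝ := fun j => |x j - y j| with hu
    have hub : ‖u‖ ≤ dist x y := by
      rw [pi_norm_le_iff_of_nonneg dist_nonneg]
      intro j
      rw [Real.norm_eq_abs, abs_abs, ← Real.dist_eq]
      exact dist_le_pi_dist x y j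
    have h1 : dist (F^[n] x i) (F^[n] y i) ≤ ((N ^ n).mulVec u) i := by
      rw [Real.dist_eq]; exact hiter n x y i
    have h2 : ((N ^ n).mulVec u) i ≤ ‖(N ^ n).mulVec u‖ :=
      (le_abs_self _).trans (by rw [← Real.norm_eq_abs]; exact norm_le_pi_norm _ i)
    have h3 : ‖(N ^ n).mulVec u‖ ≤ ‖N ^ n‖ * ‖u‖ := Matrix.linfty_opNorm_mulVec _ _
    calc dist (F^[n] x i) (F^[n] y i) ≤ ‖N ^ n‖ * ‖u‖ := h1.trans (h2.trans h3)
      _ ≤ (K : ℝ) * dist x y := by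
          rw [hKdef, coe_nnnorm]
          exact mul_le_mul_of_nonneg_left hub (norm_nonneg _)
  have hC : ContractingWith K (F^[n]) := ⟨hK, hLip⟩
  -- unique fixed point
  have hfix : Function.IsFixedPt F (hC.fixedPoint (F^[n])) :=
    ContractingWith.isFixedPt_fixedPoint_iterate hC
  refine ⟨hC.fixedPoint (F^[n]), hfix.eq.symm, ?_⟩
  intro y hy
  have hyfix : Function.IsFixedPt F y := hy.symm
  exact hC.fixedPoint_unique' (hyfix.iterate n) (hfix.iterate n)
end

section
/- Let M be a real d×d matrix with spectral radius of |M| strictly less than 1, let φ : ℝ → ℝ be componentwise non-expansive, and let v ∈ ℝ^d. Define the Picard iteration x₀ = 0 and x_{t+1} = φ(M x_t + v) (φ applied entrywise). Then the sequence (x_t) converges, and its limit x satisfies x = φ(Mx + v). -/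
/-!
The Picard map `F y = φ (M y + v)` satisfies `|F y - F z| ≤ |M| |y - z|` entrywise, because `φ` is
non-expansive and `|M|` is a nonnegative matrix. Hence the successive differences of the iteration
are dominated by `|M|ⁿ |x₁ - x₀|`. By Gelfand's formula, `ρ(|M|) < 1` forces `‖|M|ⁿ‖` to decay
geometrically, so the iteration is Cauchy, and its limit is a fixed point of the continuous map `F`.
-/

open Matrix Filter

open scoped NNReal

theorem eventually_norm_pow_le_of_spectralRadius_lt {A : Type*} [NormedRing A]
    [NormedAlgebra ℂ A] [CompleteSpace A] {a : A} {r : ℝ≥0} (h : spectralRadius ℂ a < r) :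
    ∀ᶠ n : ℕ in atTop, ‖a ^ n‖ ≤ r ^ n := by
  have hgelfand := spectrum.pow_nnnorm_pow_one_div_tendsto_nhds_spectralRadius a
  filter_upwards [hgelfand.eventually_lt_const h, eventually_gt_atTop 0] with n hn hn0
  rw [one_div, ENNReal.rpow_inv_lt_iff (by positivity), ENNReal.rpow_natCast,
    ← ENNReal.coe_pow, ENNReal.coe_lt_coe] at hn
  exact_mod_cast hn.le

theorem summable_norm_pow_of_spectralRadius_lt_one {A : Type*} [NormedRing A]
    [NormedAlgebra ℂ A] [CompleteSpace A] {a : A} (h : spectralRadius ℂ a < 1) :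
    Summable fun n : ℕ => ‖a ^ n‖ := by
  obtain ⟨r, hρr, hr1⟩ := ENNReal.lt_iff_exists_nnreal_btwn.mp h
  refine .of_norm_bounded_eventually_nat (summable_geometric_of_lt_one r.coe_nonneg
    (by exact_mod_cast hr1)) ?_
  simpa only [norm_norm] using eventually_norm_pow_le_of_spectralRadius_lt hρr

section Order

variable {m n R : Type*} [Fintype n] [Ring R] [LinearOrder R] [IsStrictOrderedRing R]

theorem Matrix.mulVec_mono_of_nonneg {N : Matrix m n R} (hN : ∀ i j, 0 ≤ N i j) {y z : n → R}
    (h : y ≤ z) : N *ᵥ y ≤ N *ᵥ z :=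
  fun i => dotProduct_le_dotProduct_of_nonneg_left h (hN i)

theorem Matrix.abs_mulVec_le (M : Matrix m n R) (y : n → R) : |M *ᵥ y| ≤ M.map abs *ᵥ |y| :=
  fun i => (Finset.abs_sum_le_sum_abs _ _).trans_eq <| by simp only [abs_mul]; rfl

end Order

variable {ι : Type*} [Fintype ι]

theorem abs_sub_le_pow_mulVec [DecidableEq ι] {N : Matrix ι ι ℝ} (hN : ∀ i j, 0 ≤ N i j)
    {x : ℕ → ι → ℝ} (hx : ∀ n, |x (n + 2) - x (n + 1)| ≤ N *ᵥ |x (n + 1) - x n|) (n : ℕ) :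
    |x (n + 1) - x n| ≤ N ^ n *ᵥ |x 1 - x 0| := by
  induction n with
  | zero => simp
  | succ n ih =>
    calc |x (n + 2) - x (n + 1)| ≤ N *ᵥ |x (n + 1) - x n| := hx n
      _ ≤ N *ᵥ N ^ n *ᵥ |x 1 - x 0| := Matrix.mulVec_mono_of_nonneg hN ih
      _ = N ^ (n + 1) *ᵥ |x 1 - x 0| := by rw [mulVec_mulVec, pow_succ']

theorem pi_norm_le_of_abs_le {y z : ι → ℝ} (h : |y| ≤ z) : ‖y‖ ≤ ‖z‖ :=
  (pi_norm_le_iff_of_nonneg (norm_nonneg z)).2 fun i =>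
    (h i).trans ((le_abs_self _).trans (norm_le_pi_norm z i))

section LinftyOpNorm

attribute [local instance] Matrix.linftyOpNormedAddCommGroup Matrix.linftyOpNormedRing
  Matrix.linftyOpNormedAlgebra

theorem Matrix.linfty_opNorm_map_ofReal {m : Type*} [Fintype m] (A : Matrix m ι ℝ) :
    ‖A.map Complex.ofReal‖ = ‖A‖ := by
  simp [Matrix.linfty_opNorm_def]

theorem Matrix.summable_linfty_opNorm_pow_of_specRad_lt_one [DecidableEq ι] {N : Matrix ι ι ℝ}
    (h : specRad N < 1) : Summable fun n : ℕ => ‖N ^ n‖ := by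
  convert summable_norm_pow_of_spectralRadius_lt_one h using 2 with n
  rw [← Matrix.linfty_opNorm_map_ofReal (N ^ n)]
  exact congrArg norm (map_pow Complex.ofRealHom.mapMatrix N n)

theorem cauchySeq_of_abs_sub_le_mulVec [DecidableEq ι] {N : Matrix ι ι ℝ}
    (hN : ∀ i j, 0 ≤ N i j) (hρ : specRad N < 1) {x : ℕ → ι → ℝ}
    (hx : ∀ n, |x (n + 2) - x (n + 1)| ≤ N *ᵥ |x (n + 1) - x n|) : CauchySeq x := by
  refine cauchySeq_of_dist_le_of_summable (fun n => ‖N ^ n‖ * ‖|x 1 - x 0|‖) (fun n => ?_)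
    ((Matrix.summable_linfty_opNorm_pow_of_specRad_lt_one hρ).mul_right _)
  rw [dist_comm, dist_eq_norm]
  exact (pi_norm_le_of_abs_le (abs_sub_le_pow_mulVec hN hx n)).trans
    (Matrix.linfty_opNorm_mulVec _ _)

end LinftyOpNorm

theorem abs_sub_picard_le {φ : ℝ → ℝ} (hφ : ∀ a b : ℝ, |φ a - φ b| ≤ |a - b|)
    (M : Matrix ι ι ℝ) (v y z : ι → ℝ) :
    |(fun i => φ ((M *ᵥ y + v) i)) - fun i => φ ((M *ᵥ z + v) i)| ≤ M.map abs *ᵥ |y - z| :=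
  calc _ ≤ |(M *ᵥ y + v) - (M *ᵥ z + v)| := fun i => hφ _ _
    _ = |M *ᵥ (y - z)| := by rw [add_sub_add_right_eq_sub, mulVec_sub]
    _ ≤ M.map abs *ᵥ |y - z| := Matrix.abs_mulVec_le M _

theorem stmt_1_general {d : ℕ} (M : Matrix (Fin d) (Fin d) ℝ)
    (hρ : specRad (M.map fun a => |a|) < 1)
    (φ : ℝ → ℝ) (hφ : ∀ a b : ℝ, |φ a - φ b| ≤ |a - b|)
    (v : Fin d → ℝ)
    (x : ℕ → Fin d → ℝ)
    (hxs : ∀ t, x (t + 1) = fun i => φ ((M.mulVec (x t) + v) i)) :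
    ∃ xl : Fin d → ℝ,
      Tendsto x atTop (nhds xl) ∧ xl = fun i => φ ((M.mulVec xl + v) i) := by
  have hcauchy : CauchySeq x :=
    cauchySeq_of_abs_sub_le_mulVec (fun i j => abs_nonneg (M i j)) hρ fun n => by
      rw [hxs (n + 1), hxs n]
      exact abs_sub_picard_le hφ M v _ _
  obtain ⟨xl, hxl⟩ := cauchySeq_tendsto_of_complete hcauchy
  have hφc : Continuous φ :=
    (LipschitzWith.of_dist_le_mul (K := 1) fun a b => by
      simpa [Real.dist_eq] using hφ a b).continuous
  have hpicard : Continuous fun y : Fin d → ℝ => fun i => φ ((M *ᵥ y + v) i) :=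
    continuous_pi fun i => hφc.comp <| (continuous_apply i).comp <|
      (continuous_const.matrix_mulVec continuous_id).add continuous_const
  refine ⟨xl, hxl, tendsto_nhds_unique (hxl.comp (tendsto_add_atTop_nat 1)) ?_⟩
  simpa only [Function.comp_def, hxs] using (hpicard.tendsto xl).comp hxl

theorem stmt_1 {d : ℕ} (M : Matrix (Fin d) (Fin d) ℝ)
    (hρ : specRad (M.map fun a => |a|) < 1)
    (φ : ℝ → ℝ) (hφ : ∀ a b : ℝ, |φ a - φ b| ≤ |a - b|)
    (v : Fin d → ℝ)
    (x : ℕ → Fin d → ℝ)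
    (hx0 : x 0 = 0)
    (hxs : ∀ t, x (t + 1) = fun i => φ ((M.mulVec (x t) + v) i)) :
    ∃ xl : Fin d → ℝ,
      Tendsto x atTop (nhds xl) ∧ xl = fun i => φ ((M.mulVec xl + v) i) :=
  stmt_1_general M hρ φ hφ v x hxs
end

section
/- Let M be a real d×d matrix with spectral radius of |M| strictly less than 1, let φ : ℝ → ℝ be componentwise non-expansive, let v ∈ ℝ^d, and define x₀ = 0, x_{t+1} = φ(M x_t + v) entrywise. Then the matrix I − |M| is invertible, and for all integers n > m ≥ 1 the entrywise inequality |x_n − x_m| ≤ |M|^m (I − |M|)^{−1} |x_1 − x_0| holds, where |x| denotes the entrywise absolute value of the vector x. -/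
/-!
By Gelfand's formula, `ρ(|M|) < 1` makes the Neumann series `∑ |M|^k` converge, so `I - |M|` is
invertible with inverse `∑ |M|^k`, an entrywise nonnegative matrix. Non-expansiveness of `φ` gives
`|x_{t+2} - x_{t+1}| ≤ |M| |x_{t+1} - x_t|` entrywise, hence `|x_{t+1} - x_t| ≤ |M|^t |x_1 - x_0|`.
Telescoping, `|x_n - x_m| ≤ |M|^m (∑_{j < n-m} |M|^j) |x_1 - x_0|`, and the partial sum is dominated
by the full series `(I - |M|)⁻¹`.
-/

open Matrix

open Filter in
theorem summable_pow_of_spectralRadius_lt_one {A : Type*} [NormedRing A] [NormedAlgebra ℂ A]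
    [CompleteSpace A] {a : A} (ha : spectralRadius ℂ a < 1) : Summable (a ^ ·) := by
  obtain ⟨r, hρr, hr1⟩ := ENNReal.lt_iff_exists_nnreal_btwn.mp ha
  have hgelfand := spectrum.pow_nnnorm_pow_one_div_tendsto_nhds_spectralRadius a
  have hbound : ∀ᶠ n : ℕ in atTop, ‖a ^ n‖ ≤ (r : ℝ) ^ n := by
    filter_upwards [hgelfand.eventually_lt_const hρr, eventually_ge_atTop 1] with n hn hn1
    have hn0 : (n : ℝ) ≠ 0 := by positivity
    have := ENNReal.rpow_le_rpow hn.le (Nat.cast_nonneg (α := ℝ) n)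
    rw [← ENNReal.rpow_mul, one_div, inv_mul_cancel₀ hn0, ENNReal.rpow_one,
      ENNReal.rpow_natCast, ← ENNReal.coe_pow, ENNReal.coe_le_coe] at this
    exact_mod_cast this
  exact .of_norm_bounded_eventually_nat
    (summable_geometric_of_lt_one r.coe_nonneg (mod_cast hr1)) hbound

namespace Matrix

section OrderedSemiring

variable {α m n : Type*} [Semiring α] [PartialOrder α] [IsOrderedRing α] [Fintype n]
  {A B : Matrix m n α}

theorem mulVec_mono_of_nonneg_s2 (hA : ∀ i j, 0 ≤ A i j) {u w : n → α} (h : u ≤ w) :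
    A *ᵥ u ≤ A *ᵥ w :=
  fun i => Finset.sum_le_sum fun j _ => mul_le_mul_of_nonneg_left (h j) (hA i j)

theorem mulVec_le_mulVec_of_le (hAB : ∀ i j, A i j ≤ B i j) {w : n → α} (hw : 0 ≤ w) :
    A *ᵥ w ≤ B *ᵥ w :=
  fun i => Finset.sum_le_sum fun j _ => mul_le_mul_of_nonneg_right (hAB i j) (hw j)

end OrderedSemiring

theorem abs_mulVec_le_s2 {m n : Type*} [Fintype n] (M : Matrix m n ℝ) (u : n → ℝ) :
    |M *ᵥ u| ≤ M.map (|·|) *ᵥ |u| := fun i => by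
  simp only [Pi.abs_apply, mulVec, dotProduct, map_apply, ← abs_mul]
  exact Finset.abs_sum_le_sum_abs _ _

variable {ι : Type*} [Fintype ι] [DecidableEq ι]

section SpectralRadius

-- Any norm inducing the product topology would do; the `ℓ∞` operator norm makes complex
-- matrices a Banach algebra.
attribute [local instance] Matrix.linftyOpNormedRing Matrix.linftyOpNormedAlgebra

theorem summable_pow_of_specRad_lt_one {A : Matrix ι ι ℝ} (hA : specRad A < 1) :
    Summable (A ^ ·) := by
  have hre := (summable_pow_of_spectralRadius_lt_one hA).map Complex.reAddGroupHom.mapMatrix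
    (continuous_id.matrix_map Complex.continuous_re)
  convert hre using 2 with n
  have hpow : A.map Complex.ofReal ^ n = (A ^ n).map Complex.ofReal :=
    (map_pow Complex.ofRealHom.mapMatrix A n).symm
  ext i j
  simp [hpow]

end SpectralRadius

section GeometricSeries

variable {R : Type*} [CommRing R] [TopologicalSpace R] [IsTopologicalRing R] [T2Space R]
  {A : Matrix ι ι R}

theorem inv_one_sub_eq_tsum_pow (h : Summable (A ^ ·)) : (1 - A)⁻¹ = ∑' k, A ^ k :=
  inv_eq_left_inv h.tsum_pow_mul_one_sub

theorem isUnit_one_sub_of_summable_pow (h : Summable (A ^ ·)) : IsUnit (1 - A) :=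
  (isUnit_iff_isUnit_det _).mpr (isUnit_det_of_left_inverse h.tsum_pow_mul_one_sub)

end GeometricSeries

theorem sum_range_pow_apply_le_inv_one_sub_apply {A : Matrix ι ι ℝ} (hA : ∀ i j, 0 ≤ A i j)
    (h : Summable (A ^ ·)) (N : ℕ) (i j : ι) :
    (∑ k ∈ Finset.range N, A ^ k) i j ≤ (1 - A)⁻¹ i j := by
  have hij : HasSum (fun k => (A ^ k) i j) ((1 - A)⁻¹ i j) := by
    rw [inv_one_sub_eq_tsum_pow h]
    exact Pi.hasSum.mp (Pi.hasSum.mp h.hasSum i) j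
  rw [sum_apply]
  exact sum_le_hasSum _ (fun k _ => pow_apply_nonneg hA k i j) hij

end Matrix

theorem abs_comp_affine_sub_le {ι : Type*} [Fintype ι] {φ : ℝ → ℝ}
    (hφ : ∀ a b : ℝ, |φ a - φ b| ≤ |a - b|) (M : Matrix ι ι ℝ) (v y z : ι → ℝ) :
    |(fun i => φ ((M *ᵥ y + v) i)) - fun i => φ ((M *ᵥ z + v) i)| ≤ M.map (|·|) *ᵥ |y - z| :=
  fun i => calc
    |φ ((M *ᵥ y + v) i) - φ ((M *ᵥ z + v) i)| ≤ |(M *ᵥ y + v) i - (M *ᵥ z + v) i| := hφ _ _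
    _ = |M *ᵥ (y - z)| i := by simp [mulVec_sub]
    _ ≤ (M.map (|·|) *ᵥ |y - z|) i := abs_mulVec_le_s2 M (y - z) i

section ContractiveIteration

variable {ι : Type*} [Fintype ι] [DecidableEq ι] {A : Matrix ι ι ℝ} {x : ℕ → ι → ℝ}

theorem abs_succ_sub_le_pow_mulVec (hA : ∀ i j, 0 ≤ A i j)
    (hx : ∀ t, |x (t + 2) - x (t + 1)| ≤ A *ᵥ |x (t + 1) - x t|) (t : ℕ) :
    |x (t + 1) - x t| ≤ A ^ t *ᵥ |x 1 - x 0| := by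
  induction t with
  | zero => simp
  | succ t ih =>
    calc |x (t + 2) - x (t + 1)| ≤ A *ᵥ |x (t + 1) - x t| := hx t
      _ ≤ A *ᵥ (A ^ t *ᵥ |x 1 - x 0|) := mulVec_mono_of_nonneg_s2 hA ih
      _ = A ^ (t + 1) *ᵥ |x 1 - x 0| := by rw [mulVec_mulVec, pow_succ']

theorem abs_sub_le_sum_Ico_pow_mulVec (hA : ∀ i j, 0 ≤ A i j)
    (hx : ∀ t, |x (t + 2) - x (t + 1)| ≤ A *ᵥ |x (t + 1) - x t|) {m n : ℕ} (hmn : m ≤ n) :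
    |x n - x m| ≤ (∑ k ∈ Finset.Ico m n, A ^ k) *ᵥ |x 1 - x 0| := by
  induction n, hmn using Nat.le_induction with
  | base => simp
  | succ n hmn ih =>
    rw [Finset.sum_Ico_succ_top hmn, add_mulVec]
    calc |x (n + 1) - x m| = |(x n - x m) + (x (n + 1) - x n)| := by abel_nf
      _ ≤ |x n - x m| + |x (n + 1) - x n| := abs_add_le _ _
      _ ≤ _ := add_le_add ih (abs_succ_sub_le_pow_mulVec hA hx n)

theorem abs_sub_le_pow_mul_inv_one_sub_mulVec (hA : ∀ i j, 0 ≤ A i j) (hs : Summable (A ^ ·))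
    (hx : ∀ t, |x (t + 2) - x (t + 1)| ≤ A *ᵥ |x (t + 1) - x t|) {m n : ℕ} (hmn : m ≤ n) :
    |x n - x m| ≤ (A ^ m * (1 - A)⁻¹) *ᵥ |x 1 - x 0| :=
  calc |x n - x m| ≤ (∑ k ∈ Finset.Ico m n, A ^ k) *ᵥ |x 1 - x 0| :=
        abs_sub_le_sum_Ico_pow_mulVec hA hx hmn
    _ = A ^ m *ᵥ ((∑ j ∈ Finset.range (n - m), A ^ j) *ᵥ |x 1 - x 0|) := by
        rw [mulVec_mulVec, Finset.sum_Ico_eq_sum_range, Finset.mul_sum]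
        simp only [pow_add]
    _ ≤ A ^ m *ᵥ ((1 - A)⁻¹ *ᵥ |x 1 - x 0|) :=
        mulVec_mono_of_nonneg_s2 (pow_apply_nonneg hA m) <|
          mulVec_le_mulVec_of_le (sum_range_pow_apply_le_inv_one_sub_apply hA hs _) (abs_nonneg _)
    _ = (A ^ m * (1 - A)⁻¹) *ᵥ |x 1 - x 0| := mulVec_mulVec _ _ _

end ContractiveIteration

theorem stmt_2_general {d : ℕ} (M : Matrix (Fin d) (Fin d) ℝ)
    (hρ : specRad (M.map fun a => |a|) < 1)
    (φ : ℝ → ℝ) (hφ : ∀ a b : ℝ, |φ a - φ b| ≤ |a - b|)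
    (v : Fin d → ℝ)
    (x : ℕ → Fin d → ℝ)
    (hxs : ∀ t, x (t + 1) = fun i => φ ((M.mulVec (x t) + v) i)) :
    IsUnit (1 - M.map fun a => |a|) ∧
      ∀ n m : ℕ, 1 ≤ m → m < n → ∀ i : Fin d,
        |x n i - x m i| ≤
          (((M.map fun a => |a|) ^ m * (1 - M.map fun a => |a|)⁻¹).mulVec
            fun j => |x 1 j - x 0 j|) i := by
  have hs := summable_pow_of_specRad_lt_one hρ
  have hx : ∀ t, |x (t + 2) - x (t + 1)| ≤ M.map (|·|) *ᵥ |x (t + 1) - x t| := fun t => by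
    rw [hxs (t + 1), hxs t]
    exact abs_comp_affine_sub_le hφ M v _ _
  refine ⟨isUnit_one_sub_of_summable_pow hs, fun n m _ hmn i => ?_⟩
  exact abs_sub_le_pow_mul_inv_one_sub_mulVec (fun _ _ => abs_nonneg _) hs hx hmn.le i

theorem stmt_2 {d : ℕ} (M : Matrix (Fin d) (Fin d) ℝ)
    (hρ : specRad (M.map fun a => |a|) < 1)
    (φ : ℝ → ℝ) (hφ : ∀ a b : ℝ, |φ a - φ b| ≤ |a - b|)
    (v : Fin d → ℝ)
    (x : ℕ → Fin d → ℝ)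
    (hx0 : x 0 = 0)
    (hxs : ∀ t, x (t + 1) = fun i => φ ((M.mulVec (x t) + v) i)) :
    IsUnit (1 - M.map fun a => |a|) ∧
      ∀ n m : ℕ, 1 ≤ m → m < n → ∀ i : Fin d,
        |x n i - x m i| ≤
          (((M.map fun a => |a|) ^ m * (1 - M.map fun a => |a|)⁻¹).mulVec
            fun j => |x 1 j - x 0 j|) i :=
  stmt_2_general M hρ φ hφ v x hxs
end

section
/- Let W be a real m×m matrix and A a real n×n matrix such that the spectral radius of |Aᵀ ⊗ W| is strictly less than 1. Then for every componentwise non-expansive φ : ℝ → ℝ and every real m×n matrix B, the matrix equation X = φ(W X A + B), with φ applied entrywise, has exactly one solution X ∈ ℝ^{m×n}. -/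
open Matrix Kronecker

/-!
Vectorizing, `vec (W X A) = (Aᵀ ⊗ W) vec X`, so the map `T X = φ(W X A + B)` satisfies the
componentwise estimate `|vec (T X) - vec (T Y)| ≤ |Aᵀ ⊗ W| |vec X - vec Y|`, which iterates to
`|Aᵀ ⊗ W|ᵏ`. By Gelfand's formula `ρ < 1` gives a power with `L∞` operator norm `< 1`, so some
iterate of `T` is a contraction in the sup norm, and Banach's fixed point theorem applies.
-/

open Function

attribute [local instance] Matrix.linftyOpNormedAddCommGroup Matrix.linftyOpNormedRing
  Matrix.linftyOpNormedAlgebra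

theorem exists_nnnorm_pow_lt_one_of_spectralRadius_lt_one {A : Type*} [NormedRing A]
    [NormedAlgebra ℂ A] [CompleteSpace A] {a : A} (h : spectralRadius ℂ a < 1) :
    ∃ k : ℕ, ‖a ^ k‖₊ < 1 := by
  obtain ⟨k, hk, hk0⟩ :=
    ((spectrum.pow_nnnorm_pow_one_div_tendsto_nhds_spectralRadius a).eventually_lt_const h
      |>.and (Filter.eventually_gt_atTop 0)).exists
  refine ⟨k, ?_⟩
  contrapose! hk
  exact ENNReal.one_le_rpow (by exact_mod_cast hk) (by positivity)

namespace Matrix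

variable {ι κ : Type*} [Fintype κ]

theorem linfty_opNNNorm_map_ofReal [Fintype ι] (M : Matrix ι κ ℝ) :
    ‖M.map Complex.ofReal‖₊ = ‖M‖₊ := by
  simp only [linfty_opNNNorm_def, map_apply, Complex.nnnorm_real]

theorem exists_linfty_opNNNorm_pow_lt_one [Fintype ι] [DecidableEq ι] {M : Matrix ι ι ℝ}
    (h : specRad M < 1) : ∃ k : ℕ, ‖M ^ k‖₊ < 1 := by
  obtain ⟨k, hk⟩ := exists_nnnorm_pow_lt_one_of_spectralRadius_lt_one h
  refine ⟨k, ?_⟩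
  rwa [← linfty_opNNNorm_map_ofReal, show (M ^ k).map Complex.ofReal = M.map Complex.ofReal ^ k
    from M.map_pow Complex.ofRealHom k]

theorem abs_mulVec_le_s3 (M : Matrix ι κ ℝ) (v : κ → ℝ) (i : ι) :
    |(M *ᵥ v) i| ≤ (M.map abs *ᵥ fun j => |v j|) i := by
  simp only [mulVec, dotProduct, map_apply, ← abs_mul]
  exact Finset.abs_sum_le_sum_abs _ _

theorem mulVec_mono_of_nonneg_s3 {M : Matrix ι κ ℝ} (hM : ∀ i j, 0 ≤ M i j) {u v : κ → ℝ}
    (huv : u ≤ v) : M *ᵥ u ≤ M *ᵥ v := fun i =>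
  Finset.sum_le_sum fun j _ => mul_le_mul_of_nonneg_left (huv j) (hM i j)

end Matrix

section

variable {ι : Type*} [Fintype ι] [DecidableEq ι]

theorem lipschitzWith_of_abs_sub_le_mulVec {M : Matrix ι ι ℝ} {f : (ι → ℝ) → ι → ℝ}
    (hf : ∀ u v, (fun i => |f u i - f v i|) ≤ M *ᵥ fun i => |u i - v i|) :
    LipschitzWith ‖M‖₊ f := by
  refine LipschitzWith.of_dist_le_mul fun u v => ?_
  rw [dist_eq_norm, dist_eq_norm]
  calc ‖f u - f v‖ ≤ ‖M *ᵥ fun i => |u i - v i|‖ :=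
        pi_norm_le_iff_of_nonneg (norm_nonneg _) |>.2 fun i =>
          (hf u v i).trans <| (le_abs_self _).trans (norm_le_pi_norm (M *ᵥ _) i)
    _ ≤ ‖M‖ * ‖fun i => |u i - v i|‖ := linfty_opNorm_mulVec _ _
    _ = ‖M‖ * ‖u - v‖ := by simp only [Pi.norm_def, Real.nnnorm_abs]; rfl

theorem abs_sub_iterate_le_pow_mulVec {N : Matrix ι ι ℝ} (hN : ∀ i j, 0 ≤ N i j)
    {T : (ι → ℝ) → ι → ℝ} (hT : ∀ u v, (fun i => |T u i - T v i|) ≤ N *ᵥ fun i => |u i - v i|)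
    (k : ℕ) (u v : ι → ℝ) :
    (fun i => |T^[k] u i - T^[k] v i|) ≤ N ^ k *ᵥ fun i => |u i - v i| := by
  induction k with
  | zero => simp
  | succ k ih =>
    rw [iterate_succ_apply', iterate_succ_apply', pow_succ', ← mulVec_mulVec]
    exact (hT _ _).trans (mulVec_mono_of_nonneg_s3 hN ih)

end

theorem ContractingWith.existsUnique_isFixedPt_of_iterate {α : Type*} [MetricSpace α]
    [Nonempty α] [CompleteSpace α] {K : NNReal} {f : α → α} {k : ℕ}
    (hf : ContractingWith K f^[k]) : ∃! x, IsFixedPt f x :=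
  ⟨_, hf.isFixedPt_fixedPoint_iterate, fun _ hx => hf.fixedPoint_unique (hx.iterate k)⟩

theorem existsUnique_isFixedPt_of_abs_sub_le_mulVec {ι : Type*} [Fintype ι] [DecidableEq ι]
    {N : Matrix ι ι ℝ} (hN : ∀ i j, 0 ≤ N i j) (hρ : specRad N < 1)
    {T : (ι → ℝ) → ι → ℝ} (hT : ∀ u v, (fun i => |T u i - T v i|) ≤ N *ᵥ fun i => |u i - v i|) :
    ∃! u, IsFixedPt T u := by
  obtain ⟨k, hk⟩ := exists_linfty_opNNNorm_pow_lt_one hρ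
  exact ContractingWith.existsUnique_isFixedPt_of_iterate (k := k)
    ⟨hk, lipschitzWith_of_abs_sub_le_mulVec (abs_sub_iterate_le_pow_mulVec hN hT k)⟩

theorem Matrix.abs_vec_map_sub_le {l m n p : Type*} [Fintype m] [Fintype n]
    (W : Matrix l m ℝ) (A : Matrix n p ℝ) (B : Matrix l p ℝ) {φ : ℝ → ℝ}
    (hφ : ∀ a b : ℝ, |φ a - φ b| ≤ |a - b|) (X Y : Matrix m n ℝ) :
    (fun q => |vec ((W * X * A + B).map φ) q - vec ((W * Y * A + B).map φ) q|) ≤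
      (Aᵀ ⊗ₖ W).map abs *ᵥ fun q => |vec X q - vec Y q| := fun q =>
  calc |vec ((W * X * A + B).map φ) q - vec ((W * Y * A + B).map φ) q|
      ≤ |vec (W * X * A + B) q - vec (W * Y * A + B) q| := hφ _ _
    _ = |((Aᵀ ⊗ₖ W) *ᵥ vec (X - Y)) q| := by
      rw [kronecker_mulVec_vec, transpose_transpose, Matrix.mul_sub, Matrix.sub_mul]
      simp only [vec_add, vec_sub, Pi.add_apply, Pi.sub_apply, add_sub_add_right_eq_sub]
    _ ≤ _ := abs_mulVec_le_s3 _ _ q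

theorem stmt_3 {m n : ℕ} (W : Matrix (Fin m) (Fin m) ℝ) (A : Matrix (Fin n) (Fin n) ℝ)
    (hρ : specRad ((Aᵀ ⊗ₖ W).map fun a => |a|) < 1)
    (φ : ℝ → ℝ) (hφ : ∀ a b : ℝ, |φ a - φ b| ≤ |a - b|)
    (B : Matrix (Fin m) (Fin n) ℝ) :
    ∃! X : Matrix (Fin m) (Fin n) ℝ, X = (W * X * A + B).map φ := by
  let T : Matrix (Fin m) (Fin n) ℝ → Matrix (Fin m) (Fin n) ℝ := fun X => (W * X * A + B).map φ
  let e : Matrix (Fin m) (Fin n) ℝ ≃ (Fin n × Fin m → ℝ) := .ofBijective vec vec_bijective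
  have hτ : ∃! v, IsFixedPt (e ∘ T ∘ e.symm) v :=
    existsUnique_isFixedPt_of_abs_sub_le_mulVec (fun _ _ => abs_nonneg _) hρ fun u v => by
      have h := abs_vec_map_sub_le W A B hφ (e.symm u) (e.symm v)
      rwa [show vec (e.symm u) = u from e.apply_symm_apply u,
        show vec (e.symm v) = v from e.apply_symm_apply v] at h
  refine e.existsUnique_congr_left.mpr ((existsUnique_congr fun v => ?_).mpr hτ)
  rw [e.symm_apply_eq, eq_comm]
  rfl
end

section
/- Let W be a real m×m matrix and A a real n×n matrix such that the spectral (operator 2-) norm satisfies ‖Aᵀ ⊗ W‖₂ < 1. Then for every componentwise non-expansive φ : ℝ → ℝ and every real m×n matrix B, the map X ↦ φ(W X A + B) is a contraction of ℝ^{m×n} with respect to the Frobenius norm (with Lipschitz constant ‖Aᵀ ⊗ W‖₂ < 1), and the equation X = φ(W X A + B) has exactly one solution. -/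
/-!
Vectorising `X` turns `X ↦ W X A` into multiplication by `Aᵀ ⊗ W`
(`Matrix.kronecker_mulVec_vec`) and the Frobenius norm into the Euclidean norm, so
`‖W X A‖_F ≤ ‖Aᵀ ⊗ W‖₂ ‖X‖_F`. Applying a non-expansive `φ` entrywise does not increase
Frobenius distances, so `X ↦ φ(W X A + B)` is a contraction, and the Banach fixed-point theorem
gives the unique solution.
-/

open Matrix Kronecker

/-- The spectral (operator 2-) norm of a real square matrix: the operator norm of the
associated linear map on Euclidean space. -/
noncomputable def l2OpNorm {ι : Type*} [Fintype ι] [DecidableEq ι]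
    (M : Matrix ι ι ℝ) : ℝ :=
  ‖Matrix.toEuclideanCLM (𝕜 := ℝ) M‖

/-- The Frobenius norm of a real matrix: the square root of the sum of the squares of
its entries. -/
noncomputable def frobNorm {ι κ : Type*} [Fintype ι] [Fintype κ]
    (X : Matrix ι κ ℝ) : ℝ :=
  Real.sqrt (∑ i, ∑ j, X i j ^ 2)

theorem frobNorm_eq_norm_vec {ι κ : Type*} [Fintype ι] [Fintype κ] (X : Matrix ι κ ℝ) :
    frobNorm X = ‖WithLp.toLp 2 X.vec‖ := by
  rw [EuclideanSpace.norm_eq, frobNorm, Fintype.sum_prod_type, Finset.sum_comm]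
  simp [vec, sq_abs]

theorem frobNorm_map_sub_map_le {ι κ : Type*} [Fintype ι] [Fintype κ] {φ : ℝ → ℝ}
    (hφ : ∀ a b : ℝ, |φ a - φ b| ≤ |a - b|) (P Q : Matrix ι κ ℝ) :
    frobNorm (P.map φ - Q.map φ) ≤ frobNorm (P - Q) := by
  refine Real.sqrt_le_sqrt <| Finset.sum_le_sum fun i _ => Finset.sum_le_sum fun j _ => ?_
  simpa only [Matrix.sub_apply, Matrix.map_apply, sq_abs] using
    pow_le_pow_left₀ (abs_nonneg _) (hφ (P i j) (Q i j)) 2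

section Kronecker

variable {ι κ : Type*} [Fintype ι] [DecidableEq ι] [Fintype κ] [DecidableEq κ]
  (W : Matrix ι ι ℝ) (A : Matrix κ κ ℝ)

theorem frobNorm_mul_mul_le (Z : Matrix ι κ ℝ) :
    frobNorm (W * Z * A) ≤ l2OpNorm (Aᵀ ⊗ₖ W) * frobNorm Z := by
  have hvec : WithLp.toLp 2 (W * Z * A).vec =
      toEuclideanCLM (𝕜 := ℝ) (Aᵀ ⊗ₖ W) (WithLp.toLp 2 Z.vec) := by
    rw [toEuclideanCLM_toLp, kronecker_mulVec_vec, transpose_transpose]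
  rw [frobNorm_eq_norm_vec, frobNorm_eq_norm_vec, hvec]
  exact (toEuclideanCLM (𝕜 := ℝ) (Aᵀ ⊗ₖ W)).le_opNorm _

theorem frobNorm_map_mul_mul_add_sub_le {φ : ℝ → ℝ}
    (hφ : ∀ a b : ℝ, |φ a - φ b| ≤ |a - b|) (B X Y : Matrix ι κ ℝ) :
    frobNorm ((W * X * A + B).map φ - (W * Y * A + B).map φ) ≤
      l2OpNorm (Aᵀ ⊗ₖ W) * frobNorm (X - Y) :=
  calc _ ≤ frobNorm ((W * X * A + B) - (W * Y * A + B)) := frobNorm_map_sub_map_le hφ _ _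
    _ = frobNorm (W * (X - Y) * A) := by
      rw [Matrix.mul_sub, Matrix.sub_mul, add_sub_add_right_eq_sub]
    _ ≤ _ := frobNorm_mul_mul_le W A _

end Kronecker

section Frobenius

attribute [local instance] frobeniusNormedAddCommGroup frobeniusNormedSpace

theorem frobNorm_eq_norm {ι κ : Type*} [Fintype ι] [Fintype κ] (X : Matrix ι κ ℝ) :
    frobNorm X = ‖X‖ := by
  rw [frobenius_norm_def, frobNorm, Real.sqrt_eq_rpow]
  simp [Real.norm_eq_abs, sq_abs]

theorem existsUnique_eq_of_frobNorm_sub_le {ι κ : Type*} [Fintype ι] [Fintype κ]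
    {f : Matrix ι κ ℝ → Matrix ι κ ℝ} {K : NNReal} (hK : K < 1)
    (hf : ∀ X Y, frobNorm (f X - f Y) ≤ K * frobNorm (X - Y)) :
    ∃! X, X = f X := by
  have hf' : ContractingWith K f := ⟨hK, LipschitzWith.of_dist_le_mul fun X Y => by
    simpa only [dist_eq_norm, frobNorm_eq_norm] using hf X Y⟩
  exact ⟨_, (hf'.fixedPoint_isFixedPt).symm, fun X hX => hf'.fixedPoint_unique hX.symm⟩

end Frobenius

theorem stmt_7 {m n : ℕ} (W : Matrix (Fin m) (Fin m) ℝ) (A : Matrix (Fin n) (Fin n) ℝ)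
    (hnorm : l2OpNorm (Aᵀ ⊗ₖ W) < 1)
    (φ : ℝ → ℝ) (hφ : ∀ a b : ℝ, |φ a - φ b| ≤ |a - b|)
    (B : Matrix (Fin m) (Fin n) ℝ) :
    (∀ X Y : Matrix (Fin m) (Fin n) ℝ,
      frobNorm ((W * X * A + B).map φ - (W * Y * A + B).map φ) ≤
        l2OpNorm (Aᵀ ⊗ₖ W) * frobNorm (X - Y)) ∧
    ∃! X : Matrix (Fin m) (Fin n) ℝ, X = (W * X * A + B).map φ := by
  have hlip := frobNorm_map_mul_mul_add_sub_le W A hφ B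
  exact ⟨hlip, existsUnique_eq_of_frobNorm_sub_le
    (K := ‖toEuclideanCLM (𝕜 := ℝ) (Aᵀ ⊗ₖ W)‖₊) hnorm hlip⟩
end

section
/- Let φ : ℝ → ℝ be positively homogeneous (φ(αx) = α φ(x) for all α ≥ 0 and x ∈ ℝ), applied entrywise. Let W ∈ ℝ^{m×m}, A ∈ ℝ^{n×n}, B ∈ ℝ^{m×n}, let s ∈ ℝ^m have all entries strictly positive, and set S = diag(s), W' = S W S^{−1}. Then a matrix X ∈ ℝ^{m×n} satisfies X = φ(W X A + B) if and only if the rescaled matrix X' = S X satisfies X' = φ(W' X' A + S B). -/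
open Matrix

theorem stmt_15 {m n : ℕ} (φ : ℝ → ℝ)
    (hφ : ∀ α x : ℝ, 0 ≤ α → φ (α * x) = α * φ x)
    (W : Matrix (Fin m) (Fin m) ℝ) (A : Matrix (Fin n) (Fin n) ℝ)
    (B : Matrix (Fin m) (Fin n) ℝ)
    (s : Fin m → ℝ) (hs : ∀ i, 0 < s i)
    (X : Matrix (Fin m) (Fin n) ℝ) :
    X = (W * X * A + B).map φ ↔
      Matrix.diagonal s * X =
        ((Matrix.diagonal s * W * (Matrix.diagonal s)⁻¹) * (Matrix.diagonal s * X) * A +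
          Matrix.diagonal s * B).map φ := by
  have hdet : IsUnit (Matrix.diagonal s).det := by
    rw [Matrix.det_diagonal]
    exact (Finset.prod_pos (fun i _ => hs i)).ne'.isUnit
  have hinv : (Matrix.diagonal s)⁻¹ * Matrix.diagonal s = 1 :=
    Matrix.nonsing_inv_mul _ hdet
  have hsimp : Matrix.diagonal s * W * (Matrix.diagonal s)⁻¹ * (Matrix.diagonal s * X) =
      Matrix.diagonal s * (W * X) := by
    rw [show Matrix.diagonal s * W * (Matrix.diagonal s)⁻¹ * (Matrix.diagonal s * X)
        = Matrix.diagonal s * W * ((Matrix.diagonal s)⁻¹ * Matrix.diagonal s) * X by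
      simp [Matrix.mul_assoc], hinv]
    simp [Matrix.mul_assoc]
  have hmap : ∀ M : Matrix (Fin m) (Fin n) ℝ,
      (Matrix.diagonal s * M).map φ = Matrix.diagonal s * M.map φ := by
    intro M
    ext i j
    simp [Matrix.map_apply, Matrix.diagonal_mul, hφ _ _ (hs i).le]
  rw [hsimp, show Matrix.diagonal s * (W * X) * A + Matrix.diagonal s * B
      = Matrix.diagonal s * (W * X * A + B) by rw [Matrix.mul_add, Matrix.mul_assoc], hmap]
  constructor
  · intro h; rw [← h]
  · intro h
    ext i j
    have := congrFun (congrFun h i) j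
    simp only [Matrix.diagonal_mul] at this
    exact mul_left_cancel₀ (hs i).ne' this
end

section
/- Let A ∈ ℝ^{n×n}, let φ₁, …, φ_L : ℝ → ℝ be componentwise non-expansive functions, and let W₁, …, W_L be real m_l×m_l matrices such that for every layer l and every matrix B of compatible size, the equation X = φ_l(W_l X A + B) has exactly one solution (i.e., each pair (W_l, A) is well-posed for φ_l). Then for every input matrix U and every choice of functions b₁ (mapping U to an m₁×n matrix) and b_l for l ≥ 2 (mapping m_{l−1}×n matrices to m_l×n matrices), the multi-layer system X₁ = φ₁(W₁ X₁ A + b₁(U)), X_l = φ_l(W_l X_l A + b_l(X_{l−1})) for l = 2, …, L, has exactly one solution (X₁, …, X_L). -/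
open Matrix

theorem stmt_18 {n L : ℕ} (A : Matrix (Fin n) (Fin n) ℝ)
    (md : Fin (L + 1) → ℕ)
    (φ : Fin L → ℝ → ℝ)
    (hφ : ∀ l : Fin L, ∀ a b : ℝ, |φ l a - φ l b| ≤ |a - b|)
    (W : ∀ l : Fin L, Matrix (Fin (md l.succ)) (Fin (md l.succ)) ℝ)
    (hwp : ∀ l : Fin L, ∀ B : Matrix (Fin (md l.succ)) (Fin n) ℝ,
      ∃! X : Matrix (Fin (md l.succ)) (Fin n) ℝ, X = (W l * X * A + B).map (φ l))
    (U : Matrix (Fin (md 0)) (Fin n) ℝ)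
    (b : ∀ l : Fin L,
      Matrix (Fin (md l.castSucc)) (Fin n) ℝ → Matrix (Fin (md l.succ)) (Fin n) ℝ) :
    ∃! X : ∀ l : Fin (L + 1), Matrix (Fin (md l)) (Fin n) ℝ,
      X 0 = U ∧
      ∀ l : Fin L, X l.succ = (W l * X l.succ * A + b l (X l.castSucc)).map (φ l) := by
  set X : ∀ l : Fin (L + 1), Matrix (Fin (md l)) (Fin n) ℝ :=
    Fin.induction U (fun l ih => (hwp l (b l ih)).choose) with hX
  refine ⟨X, ⟨?_, ?_⟩, ?_⟩
  · simp [hX]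
  · intro l
    have h := (hwp l (b l (X l.castSucc))).choose_spec.1
    have : X l.succ = (hwp l (b l (X l.castSucc))).choose := by
      simp [hX, Fin.induction_succ]
    rw [this]; exact h
  · intro Y ⟨hY0, hYs⟩
    funext l
    induction l using Fin.induction with
    | zero => simp [hY0, hX]
    | succ l ih =>
      have hXs : X l.succ = (hwp l (b l (X l.castSucc))).choose := by
        simp [hX, Fin.induction_succ]
      rw [hXs, ← ih]
      exact (hwp l (b l (Y l.castSucc))).choose_spec.2 _ (hYs l)
end
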